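/- Every ideal maximal among countable strongly annihilated ideals of a commutative ring R is prime. -/

import Mathlib

/-- An ideal `I` is countable strongly annihilated if for each countable subset `S ⊆ I`
and each `b ∉ I` there exists `c` with `c * a = 0` for all `a ∈ S` but `c * b ≠ 0`. -/
def CountableStronglyAnnihilated {R : Type*} [CommRing R] (I : Ideal R) : Prop :=
  ∀ S : Set R, S.Countable → S ⊆ I → ∀ b ∉ I, ∃ c : R, (∀ a ∈ S, c * a = 0) ∧ c * b ≠ 0

/-!
If `I` is maximal among proper countable strongly annihilated ideals and `x ∉ I`, then the
colon ideal `I : x` is again proper and countable strongly annihilated and contains `I`,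
so it equals `I`; hence `x * y ∈ I` forces `y ∈ I`.
-/

/-- A witness for `I : T` is obtained from a witness for `I` by multiplying it by the element
`t ∈ T` that moves `b` out of `I`. -/
theorem CountableStronglyAnnihilated.colon {R : Type*} [CommRing R] {I : Ideal R}
    (hI : CountableStronglyAnnihilated I) (T : Set R) :
    CountableStronglyAnnihilated (I.colon T) := by
  intro S hS hSI b hb
  obtain ⟨t, ht, hbt⟩ : ∃ t ∈ T, b * t ∉ I := by
    simpa [Submodule.mem_colon] using hb
  have hSt : (· * t) '' S ⊆ I := by
    rintro _ ⟨a, ha, rfl⟩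
    exact Submodule.mem_colon.mp (hSI ha) t ht
  obtain ⟨c, hcS, hcb⟩ := hI _ (hS.image _) hSt (b * t) hbt
  refine ⟨c * t, fun a ha => ?_, ?_⟩
  · rw [mul_right_comm, mul_assoc]
    exact hcS _ ⟨a, ha, rfl⟩
  · rwa [mul_right_comm, mul_assoc]

theorem Ideal.colon_singleton_ne_top {R : Type*} [CommRing R] {I : Ideal R} {x : R}
    (hx : x ∉ I) : I.colon {x} ≠ ⊤ := by
  rwa [Ne, Submodule.colon_eq_top_iff_subset, Set.singleton_subset_iff]

/-- Every ideal maximal among (proper) countable strongly annihilated ideals is prime. -/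
theorem stmt3 {R : Type*} [CommRing R] (I : Ideal R)
    (hI : CountableStronglyAnnihilated I) (hproper : I ≠ ⊤)
    (hmax : ∀ J : Ideal R, CountableStronglyAnnihilated J → J ≠ ⊤ → I ≤ J → J = I) :
    I.IsPrime := by
  refine ⟨hproper, fun {x y} hxy => or_iff_not_imp_left.mpr fun hx => ?_⟩
  have hcolon : I.colon {x} = I :=
    hmax _ (hI.colon {x}) (Ideal.colon_singleton_ne_top hx) Ideal.le_colon
  rw [← hcolon, Submodule.mem_colon_singleton, smul_eq_mul, mul_comm]
  exact hxy
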